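/- Mollified density upper/lower bounds: under the hypotheses of the previous lemma (0 < m ≤ ρ₀ ≤ M, ‖(ρ₀−1)/r‖_∞ < ∞), there exists ε₀ > 0 such that for all 0 < ε ≤ ε₀ one has m/2 ≤ ρ₀^ε ≤ M + m/2 on ℝ³ (in particular ρ₀^ε stays bounded away from 0 and ∞). -/

import Mathlib

open MeasureTheory

/-- Distance to the `x₃`-axis in `ℝ³`. -/
noncomputable def cylR (x : EuclideanSpace ℝ (Fin 3)) : ℝ :=
  Real.sqrt ((x 0) ^ 2 + (x 1) ^ 2)

/-- The point `(0, 0, z)` on the `x₃`-axis. -/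
noncomputable def axisPt (z : ℝ) : EuclideanSpace ℝ (Fin 3) :=
  (WithLp.equiv 2 (Fin 3 → ℝ)).symm ![0, 0, z]

/-- The rescaled mollifier `J^ε(x) = ε^{-3} J(x/ε)`. -/
noncomputable def moll (J : EuclideanSpace ℝ (Fin 3) → ℝ) (ε : ℝ)
    (x : EuclideanSpace ℝ (Fin 3)) : ℝ :=
  ε⁻¹ ^ 3 * J (ε⁻¹ • x)

lemma cylR_nonneg (x : EuclideanSpace ℝ (Fin 3)) : 0 ≤ cylR x := Real.sqrt_nonneg _

lemma cylR_smul (c : ℝ) (hc : 0 ≤ c) (x : EuclideanSpace ℝ (Fin 3)) :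
    cylR (c • x) = c * cylR x := by
  unfold cylR
  rw [PiLp.smul_apply, PiLp.smul_apply, smul_eq_mul, smul_eq_mul, mul_pow, mul_pow,
    ← mul_add, Real.sqrt_mul (by positivity), Real.sqrt_sq hc]

lemma cylR_axisPt_sub (z : ℝ) (y : EuclideanSpace ℝ (Fin 3)) :
    cylR (axisPt z - y) = cylR y := by
  unfold cylR axisPt
  simp [PiLp.sub_apply, neg_pow, neg_sq]

lemma norm_le_of_J {x : EuclideanSpace ℝ (Fin 3)} (h1 : cylR x ≤ 2) (h2 : |x 2| ≤ 1) :
    ‖x‖ ≤ 3 := by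
  have h01 : (x 0) ^ 2 + (x 1) ^ 2 ≤ 4 := by
    have := Real.sqrt_le_sqrt (le_of_eq (rfl : (x 0) ^ 2 + (x 1) ^ 2 = _))
    have h4 : Real.sqrt ((x 0) ^ 2 + (x 1) ^ 2) ≤ 2 := h1
    nlinarith [Real.sq_sqrt (by positivity : (0:ℝ) ≤ (x 0) ^ 2 + (x 1) ^ 2),
      Real.sqrt_nonneg ((x 0) ^ 2 + (x 1) ^ 2)]
  have h2' : (x 2) ^ 2 ≤ 1 := by nlinarith [abs_nonneg (x 2), sq_abs (x 2)]
  rw [EuclideanSpace.norm_eq]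
  have : ∑ i, ‖x i‖ ^ 2 = (x 0) ^ 2 + (x 1) ^ 2 + (x 2) ^ 2 := by
    rw [Fin.sum_univ_three]; simp [Real.norm_eq_abs, sq_abs]
  rw [this]
  have : Real.sqrt ((x 0) ^ 2 + (x 1) ^ 2 + (x 2) ^ 2) ≤ Real.sqrt 9 :=
    Real.sqrt_le_sqrt (by linarith)
  calc _ ≤ Real.sqrt 9 := this
    _ = 3 := by rw [show (9:ℝ) = 3 ^ 2 by norm_num, Real.sqrt_sq (by norm_num)]

section Main

variable (J : EuclideanSpace ℝ (Fin 3) → ℝ)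

lemma J_compactSupport (hJsupp : ∀ x, J x ≠ 0 → cylR x ≤ 2 ∧ |x 2| ≤ 1) :
    HasCompactSupport J := by
  refine IsCompact.of_isClosed_subset (isCompact_closedBall (0 : EuclideanSpace ℝ (Fin 3)) 3)
    (isClosed_tsupport _) (closure_minimal ?_ Metric.isClosed_closedBall)
  intro x hx
  simp only [Metric.mem_closedBall, dist_zero_right]
  exact norm_le_of_J (hJsupp x hx).1 (hJsupp x hx).2

lemma shifted_integrable (hJreg : ContDiff ℝ (⊤ : ℕ∞) J)
    (hJsupp : ∀ x, J x ≠ 0 → cylR x ≤ 2 ∧ |x 2| ≤ 1)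
    {ε : ℝ} (hε : 0 < ε) (a : EuclideanSpace ℝ (Fin 3)) :
    Integrable (fun y => moll J ε (a - y)) := by
  unfold moll
  apply Integrable.const_mul
  have hcont : Continuous fun y : EuclideanSpace ℝ (Fin 3) => J (ε⁻¹ • (a - y)) :=
    hJreg.continuous.comp (by fun_prop)
  apply hcont.integrable_of_hasCompactSupport
  refine IsCompact.of_isClosed_subset (isCompact_closedBall a (3 * ε))
    (isClosed_tsupport _) (closure_minimal ?_ Metric.isClosed_closedBall)
  intro y hy
  simp only [Function.mem_support] at hy
  have h3 : ‖ε⁻¹ • (a - y)‖ ≤ 3 := norm_le_of_J (hJsupp _ hy).1 (hJsupp _ hy).2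
  rw [norm_smul, Real.norm_eq_abs, abs_inv, abs_of_pos hε] at h3
  simp only [Metric.mem_closedBall, dist_eq_norm, ← norm_sub_rev a y]
  calc ‖a - y‖ = ε * (ε⁻¹ * ‖a - y‖) := by field_simp
    _ ≤ ε * 3 := by nlinarith [norm_nonneg (a - y)]
    _ = 3 * ε := by ring

lemma shifted_integral (hJreg : ContDiff ℝ (⊤ : ℕ∞) J)
    (hJsupp : ∀ x, J x ≠ 0 → cylR x ≤ 2 ∧ |x 2| ≤ 1)
    (hJint : ∫ x, J x = 1)
    {ε : ℝ} (hε : 0 < ε) (a : EuclideanSpace ℝ (Fin 3)) :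
    ∫ y, moll J ε (a - y) = 1 := by
  rw [integral_sub_left_eq_self (moll J ε) volume a]
  unfold moll
  rw [integral_const_mul, MeasureTheory.Measure.integral_comp_smul volume J ε⁻¹,
    finrank_euclideanSpace_fin, hJint, smul_eq_mul, mul_one]
  rw [abs_of_pos (by positivity), inv_pow, inv_inv]
  field_simp

end Main

/-- Mollified density upper/lower bounds: if `0 < m ≤ ρ₀ ≤ M` and
`‖(ρ₀−1)/r‖_∞ ≤ C₀ < ∞`, then there is `ε₀ > 0` such that for `0 < ε ≤ ε₀`,
`m/2 ≤ ρ₀^ε ≤ M + m/2` on `ℝ³`, where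
`ρ₀^ε(x) = (J^ε * ρ₀)(x) − (J^ε * (ρ₀−1))(0,0,x₃)`. -/
theorem mollified_density_bounds (J : EuclideanSpace ℝ (Fin 3) → ℝ)
    (hJreg : ContDiff ℝ (⊤ : ℕ∞) J) (hJ01 : ∀ x, 0 ≤ J x ∧ J x ≤ 1)
    (hJsupp : ∀ x, J x ≠ 0 → cylR x ≤ 2 ∧ |x 2| ≤ 1)
    (hJint : ∫ x, J x = 1)
    (hJaxi : ∀ x y, cylR x = cylR y → x 2 = y 2 → J x = J y)
    (ρ₀ : EuclideanSpace ℝ (Fin 3) → ℝ) (m M C₀ : ℝ)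
    (hmeas : Measurable ρ₀) (hm : 0 < m) (hρ : ∀ x, m ≤ ρ₀ x ∧ ρ₀ x ≤ M)
    (hρaxi : ∀ x y, cylR x = cylR y → x 2 = y 2 → ρ₀ x = ρ₀ y)
    (hC₀ : ∀ x, |ρ₀ x - 1| ≤ C₀ * cylR x) :
    ∃ ε₀ > (0 : ℝ), ∀ ε : ℝ, 0 < ε → ε ≤ ε₀ → ∀ x,
      m / 2 ≤ ((∫ y, moll J ε (x - y) * ρ₀ y)
          - ∫ y, moll J ε (axisPt (x 2) - y) * (ρ₀ y - 1)) ∧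
      ((∫ y, moll J ε (x - y) * ρ₀ y)
          - ∫ y, moll J ε (axisPt (x 2) - y) * (ρ₀ y - 1)) ≤ M + m / 2 := by
  set C' : ℝ := max C₀ 0 with hC'
  have hC'0 : 0 ≤ C' := le_max_right _ _
  refine ⟨m / (8 * (C' + 1)), by positivity, ?_⟩
  intro ε hε hεle x
  -- nonnegativity of moll
  have hmollnn : ∀ z, 0 ≤ moll J ε z := fun z => by
    unfold moll; exact mul_nonneg (by positivity) (hJ01 _).1
  -- measurability / integrability basics
  have hint₁ : Integrable (fun y => moll J ε (x - y)) :=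
    shifted_integrable J hJreg hJsupp hε x
  have hint₂ : Integrable (fun y => moll J ε (axisPt (x 2) - y)) :=
    shifted_integrable J hJreg hJsupp hε (axisPt (x 2))
  have hρmeas : AEStronglyMeasurable ρ₀ volume := hmeas.aestronglyMeasurable
  have hρbdd : ∃ C, ∀ y, ‖ρ₀ y‖ ≤ C :=
    ⟨|m| + |M|, fun y => by
      rw [Real.norm_eq_abs]
      rcases hρ y with ⟨h1, h2⟩
      rcases abs_cases m with ⟨hm1, _⟩ | ⟨hm1, _⟩ <;>
      rcases abs_cases M with ⟨hM1, _⟩ | ⟨hM1, _⟩ <;>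
      rcases abs_cases (ρ₀ y) with ⟨h3, _⟩ | ⟨h3, _⟩ <;> linarith⟩
  have hintf : Integrable (fun y => moll J ε (x - y) * ρ₀ y) := by
    simpa [mul_comm] using hint₁.bdd_mul hρmeas (Filter.Eventually.of_forall hρbdd.choose_spec)
  have hintg : Integrable (fun y => moll J ε (axisPt (x 2) - y) * (ρ₀ y - 1)) := by
    obtain ⟨C, hC⟩ := hρbdd
    have : Integrable (fun y => (ρ₀ y - 1) * moll J ε (axisPt (x 2) - y)) :=
      hint₂.bdd_mul (hρmeas.sub aestronglyMeasurable_const)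
        (c := C + 1) (Filter.Eventually.of_forall fun y => (norm_sub_le _ _).trans (by simpa using add_le_add_right (hC y) 1))
    simpa [mul_comm] using this
  have hIone₁ : ∫ y, moll J ε (x - y) = 1 :=
    shifted_integral J hJreg hJsupp hJint hε x
  have hIone₂ : ∫ y, moll J ε (axisPt (x 2) - y) = 1 :=
    shifted_integral J hJreg hJsupp hJint hε (axisPt (x 2))
  -- bounds on the first integral
  have hlow : m ≤ ∫ y, moll J ε (x - y) * ρ₀ y := by
    have : ∫ y, m * moll J ε (x - y) ≤ ∫ y, moll J ε (x - y) * ρ₀ y := by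
      apply integral_mono (hint₁.const_mul m) hintf
      intro y
      show m * moll J ε (x - y) ≤ moll J ε (x - y) * ρ₀ y
      have h1 := (hρ y).1
      have h2 := hmollnn (x - y)
      nlinarith
    rwa [integral_const_mul, hIone₁, mul_one] at this
  have hhigh : (∫ y, moll J ε (x - y) * ρ₀ y) ≤ M := by
    have : ∫ y, moll J ε (x - y) * ρ₀ y ≤ ∫ y, moll J ε (x - y) * M := by
      apply integral_mono hintf (hint₁.mul_const M)
      intro y
      show moll J ε (x - y) * ρ₀ y ≤ moll J ε (x - y) * M
      have h1 := (hρ y).2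
      have h2 := hmollnn (x - y)
      nlinarith
    rwa [integral_mul_const, hIone₁, one_mul] at this
  -- bound on the correction term
  have hcorr : |∫ y, moll J ε (axisPt (x 2) - y) * (ρ₀ y - 1)| ≤ 2 * C' * ε := by
    have hptwise : ∀ y, |moll J ε (axisPt (x 2) - y) * (ρ₀ y - 1)|
        ≤ moll J ε (axisPt (x 2) - y) * (2 * C' * ε) := by
      intro y
      by_cases h0 : moll J ε (axisPt (x 2) - y) = 0
      · rw [h0]; simp
      · have hJne : J (ε⁻¹ • (axisPt (x 2) - y)) ≠ 0 := by
          intro h; apply h0; unfold moll; rw [h, mul_zero]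
        have hcyl : cylR (ε⁻¹ • (axisPt (x 2) - y)) ≤ 2 := (hJsupp _ hJne).1
        rw [cylR_smul ε⁻¹ (by positivity), cylR_axisPt_sub] at hcyl
        have hcylY : cylR y ≤ 2 * ε := by
          have : ε⁻¹ * cylR y ≤ 2 := hcyl
          calc cylR y = ε * (ε⁻¹ * cylR y) := by field_simp
            _ ≤ ε * 2 := by nlinarith [cylR_nonneg y]
            _ = 2 * ε := by ring
        have hbound : |ρ₀ y - 1| ≤ 2 * C' * ε := by
          calc |ρ₀ y - 1| ≤ C₀ * cylR y := hC₀ y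
            _ ≤ C' * cylR y := mul_le_mul_of_nonneg_right (le_max_left _ _) (cylR_nonneg y)
            _ ≤ C' * (2 * ε) := mul_le_mul_of_nonneg_left hcylY hC'0
            _ = 2 * C' * ε := by ring
        rw [abs_mul, abs_of_nonneg (hmollnn _)]
        exact mul_le_mul_of_nonneg_left hbound (hmollnn _)
    calc |∫ y, moll J ε (axisPt (x 2) - y) * (ρ₀ y - 1)|
        ≤ ∫ y, |moll J ε (axisPt (x 2) - y) * (ρ₀ y - 1)| := by
          simpa [Real.norm_eq_abs, abs_mul] using
            norm_integral_le_integral_norm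
              (μ := volume) (fun y => moll J ε (axisPt (x 2) - y) * (ρ₀ y - 1))
      _ ≤ ∫ y, moll J ε (axisPt (x 2) - y) * (2 * C' * ε) := by
          apply integral_mono hintg.abs (hint₂.mul_const _)
          intro y
          simpa [abs_mul, abs_of_nonneg (hmollnn _)] using hptwise y
      _ = 2 * C' * ε := by rw [integral_mul_const, hIone₂, one_mul]
  have hεsmall : 2 * C' * ε ≤ m / 2 := by
    have h1 : 2 * C' * ε ≤ 2 * (C' + 1) * (m / (8 * (C' + 1))) := by
      have : 2 * C' * ε ≤ 2 * (C' + 1) * ε := by nlinarith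
      calc 2 * C' * ε ≤ 2 * (C' + 1) * ε := this
        _ ≤ 2 * (C' + 1) * (m / (8 * (C' + 1))) := by
            apply mul_le_mul_of_nonneg_left hεle (by positivity)
    have h2 : 2 * (C' + 1) * (m / (8 * (C' + 1))) = m / 4 := by field_simp; ring
    linarith
  have habs := abs_le.mp hcorr
  constructor <;> [linarith [habs.2]; linarith [habs.1]]
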